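/- arXiv:1205.4738 — 7 statements merged into one kernel-verified Lean document; each statement's English description precedes it below -/
import Mathlib

section
/- Let c₁, c₂ ∈ ℝ² be distinct points, let r ≥ 0 satisfy 2r < dist(c₁, c₂), and let p ∈ closedBall(c₁, r) and q ∈ closedBall(c₂, r) (so p ≠ q). Then the angle θ between the vectors q − p and c₂ − c₁ satisfies sin θ ≤ 2r / dist(c₁, c₂); in particular θ < π/2. -/
/-!
Write `v = c₂ - c₁` and `w = q - p`. Then `v - w = (p - c₁) - (q - c₂)`, so `‖v - w‖ ≤ 2r < ‖v‖`.
Since `sin ∠(w, v) · ‖v‖` is the distance from `v` to the line `ℝ w`, it is at most `‖v - w‖`;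
and `‖v - w‖ < ‖v‖` forces `⟪w, v⟫ > 0`, i.e. an acute angle.
-/

open Real RealInnerProductSpace InnerProductGeometry

namespace InnerProductGeometry

variable {V : Type*} [NormedAddCommGroup V] [InnerProductSpace ℝ V]

theorem sin_angle_mul_norm_le_norm_sub (x y : V) : sin (angle x y) * ‖y‖ ≤ ‖y - x‖ := by
  rcases eq_or_ne x 0 with rfl | hx
  · simp
  refine le_of_mul_le_mul_left ?_ (norm_pos_iff.2 hx)
  -- The Gram determinant of `(x, y)` equals that of `(x, y - x)`.
  calc ‖x‖ * (sin (angle x y) * ‖y‖) = sin (angle x (y - x)) * (‖x‖ * ‖y - x‖) := by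
        rw [mul_left_comm, sin_angle_mul_norm_mul_norm, sin_angle_mul_norm_mul_norm]
        simp only [inner_sub_left, inner_sub_right, real_inner_comm x y]
        ring_nf
    _ ≤ ‖x‖ * ‖y - x‖ := mul_le_of_le_one_left (by positivity) (sin_le_one _)

theorem inner_pos_of_norm_sub_lt_norm {x y : V} (h : ‖y - x‖ < ‖y‖) : 0 < ⟪x, y⟫ := by
  have hexpand := norm_sub_sq_real y x
  rw [real_inner_comm] at hexpand
  nlinarith [norm_nonneg (y - x), sq_nonneg ‖x‖]

theorem angle_lt_pi_div_two_of_norm_sub_lt_norm {x y : V} (h : ‖y - x‖ < ‖y‖) :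
    angle x y < π / 2 := by
  have hinner := inner_pos_of_norm_sub_lt_norm h
  have hx : x ≠ 0 := by rintro rfl; simp at hinner
  have hy : y ≠ 0 := by rintro rfl; simp at hinner
  exact arccos_lt_pi_div_two.2 (div_pos hinner (by positivity))

end InnerProductGeometry

theorem angle_of_balls_small_general (c₁ c₂ p q : EuclideanSpace ℝ (Fin 2)) (r : ℝ)
    (h2r : 2 * r < dist c₁ c₂)
    (hp : p ∈ Metric.closedBall c₁ r) (hq : q ∈ Metric.closedBall c₂ r) :
    p ≠ q ∧
    Real.sin (InnerProductGeometry.angle (q - p) (c₂ - c₁)) ≤ 2 * r / dist c₁ c₂ ∧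
    InnerProductGeometry.angle (q - p) (c₂ - c₁) < Real.pi / 2 := by
  have hd : ‖c₂ - c₁‖ = dist c₁ c₂ := by rw [dist_comm, dist_eq_norm]
  have hclose : ‖(c₂ - c₁) - (q - p)‖ ≤ 2 * r :=
    calc ‖(c₂ - c₁) - (q - p)‖ = dist (q - p) (c₂ - c₁) := by rw [dist_comm, dist_eq_norm]
      _ ≤ dist q c₂ + dist p c₁ := dist_vsub_vsub_le q p c₂ c₁
      _ ≤ 2 * r := by linarith [Metric.mem_closedBall.1 hp, Metric.mem_closedBall.1 hq]
  have hlt : ‖(c₂ - c₁) - (q - p)‖ < ‖c₂ - c₁‖ := hd ▸ hclose.trans_lt h2r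
  refine ⟨?_, ?_, angle_lt_pi_div_two_of_norm_sub_lt_norm hlt⟩
  · rintro rfl
    simp at hlt
  · rw [le_div_iff₀ (hd ▸ (norm_nonneg _).trans_lt hlt), ← hd]
    exact (sin_angle_mul_norm_le_norm_sub _ _).trans hclose

/-- Let `c₁, c₂ ∈ ℝ²` be distinct points, let `r ≥ 0` satisfy `2r < dist(c₁, c₂)`, and let
`p ∈ closedBall(c₁, r)` and `q ∈ closedBall(c₂, r)` (so `p ≠ q`). Then the angle `θ`
between the vectors `q − p` and `c₂ − c₁` satisfies `sin θ ≤ 2r / dist(c₁, c₂)`;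
in particular `θ < π/2`. -/
theorem angle_of_balls_small (c₁ c₂ p q : EuclideanSpace ℝ (Fin 2)) (r : ℝ)
    (hne : c₁ ≠ c₂) (hr : 0 ≤ r) (h2r : 2 * r < dist c₁ c₂)
    (hp : p ∈ Metric.closedBall c₁ r) (hq : q ∈ Metric.closedBall c₂ r) :
    p ≠ q ∧
    Real.sin (InnerProductGeometry.angle (q - p) (c₂ - c₁)) ≤ 2 * r / dist c₁ c₂ ∧
    InnerProductGeometry.angle (q - p) (c₂ - c₁) < Real.pi / 2 :=
  angle_of_balls_small_general c₁ c₂ p q r h2r hp hq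
end

section
/- Let ε ∈ (0, 1/4], let c_u, c_v ∈ ℝ² be distinct points, and set d = dist(c_u, c_v). Let A ⊆ closedBall(c_u, ε·d) and B ⊆ closedBall(c_v, ε·d). Then for any points p, p′ ∈ A and q, q′ ∈ B (with p ≠ q and p′ ≠ q′), the angle between the vectors q − p and q′ − p′ is at most 8ε. -/
/-!
Both `q - p` and `q' - p'` lie within `2ε‖cv - cu‖` of `cv - cu`. A vector `w` with
`‖w - v‖ ≤ r‖v‖` has `sin ∠(w, v) ≤ r` and `∠(w, v) ≤ π/2` (when `r ≤ 1`), so Jordan's inequality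
`2θ/π ≤ sin θ` gives `∠(w, v) ≤ πr/2`. With `r = 2ε` and the triangle inequality for angles,
the angle between the two directions is at most `2πε ≤ 8ε`.
-/

open InnerProductGeometry Real RealInnerProductSpace

/-- The Gram determinant `‖w‖²‖v‖² - ⟪w, v⟫²` in terms of `a = ‖w‖²`, `d = ‖v‖²`, `b = ⟪w, v⟫`. -/
theorem gram_le_of_sub_le {a b d r : ℝ} (ha : 0 ≤ a) (hd : 0 ≤ d)
    (h : a - 2 * b + d ≤ r ^ 2 * d) : a * d - b ^ 2 ≤ r ^ 2 * (a * d) := by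
  rcases le_or_gt 1 (r ^ 2) with h1 | h1
  · nlinarith [sq_nonneg b, mul_nonneg (mul_nonneg ha hd) (sub_nonneg.2 h1)]
  · -- AM-GM: `4(1 - r²)ad ≤ (a + (1 - r²)d)² ≤ (2b)²`.
    have hs : 0 ≤ a + (1 - r ^ 2) * d := by nlinarith
    nlinarith [sq_nonneg (a - (1 - r ^ 2) * d),
      mul_self_le_mul_self hs (by linarith : a + (1 - r ^ 2) * d ≤ 2 * b)]

namespace InnerProductGeometry

variable {V : Type*} [NormedAddCommGroup V] [InnerProductSpace ℝ V]

theorem angle_le_pi_div_two_of_inner_nonneg {x y : V} (h : 0 ≤ ⟪x, y⟫) :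
    angle x y ≤ π / 2 :=
  arccos_le_pi_div_two.2 (div_nonneg h (by positivity))

theorem inner_nonneg_of_norm_sub_le {w v : V} (h : ‖w - v‖ ≤ ‖v‖) : 0 ≤ ⟪w, v⟫ := by
  have hsq := pow_le_pow_left₀ (norm_nonneg _) h 2
  rw [norm_sub_sq_real] at hsq
  nlinarith [sq_nonneg ‖w‖]

theorem sin_angle_le_of_norm_sub_le {w v : V} {r : ℝ} (hv : v ≠ 0) (h : ‖w - v‖ ≤ r * ‖v‖) :
    sin (angle w v) ≤ r := by
  have hv' : 0 < ‖v‖ := norm_pos_iff.2 hv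
  rcases eq_or_ne w 0 with rfl | hw
  · rw [zero_sub, norm_neg] at h
    rw [angle_zero_left, sin_pi_div_two]
    nlinarith
  have hwv : 0 < ‖w‖ * ‖v‖ := mul_pos (norm_pos_iff.2 hw) hv'
  have hr : 0 ≤ r := nonneg_of_mul_nonneg_left ((norm_nonneg _).trans h) hv'
  have hsq := pow_le_pow_left₀ (norm_nonneg _) h 2
  rw [norm_sub_sq_real, mul_pow] at hsq
  have hgram : ⟪w, w⟫ * ⟪v, v⟫ - ⟪w, v⟫ * ⟪w, v⟫ ≤ (r * (‖w‖ * ‖v‖)) ^ 2 := by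
    rw [real_inner_self_eq_norm_sq, real_inner_self_eq_norm_sq]
    convert gram_le_of_sub_le (sq_nonneg ‖w‖) (sq_nonneg ‖v‖) hsq using 1 <;> ring
  have hmul : sin (angle w v) * (‖w‖ * ‖v‖) ≤ r * (‖w‖ * ‖v‖) := by
    rw [sin_angle_mul_norm_mul_norm]
    exact sqrt_le_iff.2 ⟨by positivity, hgram⟩
  exact le_of_mul_le_mul_right hmul hwv

theorem angle_le_pi_div_two_mul_of_norm_sub_le {w v : V} {r : ℝ} (hv : v ≠ 0) (hr : r ≤ 1)
    (h : ‖w - v‖ ≤ r * ‖v‖) : angle w v ≤ π / 2 * r := by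
  have hπ : angle w v ≤ π / 2 :=
    angle_le_pi_div_two_of_inner_nonneg <| inner_nonneg_of_norm_sub_le <|
      h.trans (mul_le_of_le_one_left (norm_nonneg _) hr)
  have hjordan := mul_le_sin (angle_nonneg w v) hπ
  have hsin := sin_angle_le_of_norm_sub_le hv h
  rw [div_mul_eq_mul_div, div_le_iff₀ pi_pos] at hjordan
  nlinarith [pi_pos]

end InnerProductGeometry

theorem norm_sub_sub_sub_le_of_mem_closedBall {E : Type*} [SeminormedAddCommGroup E]
    {x y a b : E} {r : ℝ} (hx : x ∈ Metric.closedBall a r) (hy : y ∈ Metric.closedBall b r) :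
    ‖(y - x) - (b - a)‖ ≤ 2 * r := by
  rw [← dist_eq_norm]
  linarith [dist_sub_sub_le y x b a, Metric.mem_closedBall.1 hx, Metric.mem_closedBall.1 hy]

theorem angle_between_directions_le_general (ε : ℝ) (hε0 : 0 < ε) (hε1 : ε ≤ 1 / 4)
    (cu cv : EuclideanSpace ℝ (Fin 2)) (hne : cu ≠ cv)
    (A B : Set (EuclideanSpace ℝ (Fin 2)))
    (hA : A ⊆ Metric.closedBall cu (ε * dist cu cv))
    (hB : B ⊆ Metric.closedBall cv (ε * dist cu cv))
    (p p' q q' : EuclideanSpace ℝ (Fin 2))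
    (hp : p ∈ A) (hp' : p' ∈ A) (hq : q ∈ B) (hq' : q' ∈ B) :
    InnerProductGeometry.angle (q - p) (q' - p') ≤ 8 * ε := by
  have hD : cv - cu ≠ 0 := sub_ne_zero.2 hne.symm
  have hd : 2 * (ε * dist cu cv) = 2 * ε * ‖cv - cu‖ := by rw [dist_comm, dist_eq_norm]; ring
  have h1 : angle (q - p) (cv - cu) ≤ π / 2 * (2 * ε) :=
    angle_le_pi_div_two_mul_of_norm_sub_le hD (by linarith)
      (hd ▸ norm_sub_sub_sub_le_of_mem_closedBall (hA hp) (hB hq))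
  have h2 : angle (q' - p') (cv - cu) ≤ π / 2 * (2 * ε) :=
    angle_le_pi_div_two_mul_of_norm_sub_le hD (by linarith)
      (hd ▸ norm_sub_sub_sub_le_of_mem_closedBall (hA hp') (hB hq'))
  calc angle (q - p) (q' - p')
      ≤ angle (q - p) (cv - cu) + angle (cv - cu) (q' - p') := angle_le_angle_add_angle _ _ _
    _ ≤ 2 * π * ε := by rw [angle_comm (cv - cu)]; linarith
    _ ≤ 8 * ε := by nlinarith [pi_le_four]

/-- Let `ε ∈ (0, 1/4]`, let `c_u, c_v ∈ ℝ²` be distinct points, and set `d = dist(c_u, c_v)`.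
Let `A ⊆ closedBall(c_u, ε·d)` and `B ⊆ closedBall(c_v, ε·d)`. Then for any points
`p, p′ ∈ A` and `q, q′ ∈ B` (with `p ≠ q` and `p′ ≠ q′`), the angle between the vectors
`q − p` and `q′ − p′` is at most `8ε`. -/
theorem angle_between_directions_le (ε : ℝ) (hε0 : 0 < ε) (hε1 : ε ≤ 1 / 4)
    (cu cv : EuclideanSpace ℝ (Fin 2)) (hne : cu ≠ cv)
    (A B : Set (EuclideanSpace ℝ (Fin 2)))
    (hA : A ⊆ Metric.closedBall cu (ε * dist cu cv))
    (hB : B ⊆ Metric.closedBall cv (ε * dist cu cv))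
    (p p' q q' : EuclideanSpace ℝ (Fin 2))
    (hp : p ∈ A) (hp' : p' ∈ A) (hq : q ∈ B) (hq' : q' ∈ B)
    (hpq : p ≠ q) (hpq' : p' ≠ q') :
    InnerProductGeometry.angle (q - p) (q' - p') ≤ 8 * ε :=
  angle_between_directions_le_general ε hε0 hε1 cu cv hne A B hA hB p p' q q' hp hp' hq hq'
end

section
/- Let p, q, x ∈ ℝ² satisfy 0 < ‖x − p‖ < ‖q − p‖, and suppose the angle between the vectors x − p and q − p is at most π/3. Then ‖x − q‖ < ‖q − p‖; that is, x lies in the open lune of p and q (the intersection of the two open disks of radius ‖q − p‖ centered at p and at q). -/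
open InnerProductGeometry Real
open scoped RealInnerProductSpace

section AngleLePiDivThree

variable {V : Type*} [NormedAddCommGroup V] [InnerProductSpace ℝ V] {u v : V}

theorem norm_mul_norm_div_two_le_inner_of_angle_le_pi_div_three (h : angle u v ≤ π / 3) :
    ‖u‖ * ‖v‖ / 2 ≤ ⟪u, v⟫ := by
  have hcos : 1 / 2 ≤ cos (angle u v) := by
    rw [← cos_pi_div_three]
    exact cos_le_cos_of_nonneg_of_le_pi (angle_nonneg u v) (by linarith [pi_pos]) h
  rw [← cos_angle_mul_norm_mul_norm]
  nlinarith [mul_nonneg (norm_nonneg u) (norm_nonneg v)]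

theorem norm_sub_lt_of_angle_le_pi_div_three (hu : 0 < ‖u‖) (huv : ‖u‖ < ‖v‖)
    (h : angle u v ≤ π / 3) : ‖u - v‖ < ‖v‖ := by
  have hinner := norm_mul_norm_div_two_le_inner_of_angle_le_pi_div_three h
  have hsq : ‖u - v‖ ^ 2 < ‖v‖ ^ 2 :=
    calc ‖u - v‖ ^ 2 = ‖u‖ ^ 2 - 2 * ⟪u, v⟫ + ‖v‖ ^ 2 := norm_sub_sq_real u v
      _ ≤ ‖v‖ ^ 2 - ‖u‖ * (‖v‖ - ‖u‖) := by linarith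
      _ < ‖v‖ ^ 2 := sub_lt_self _ (mul_pos hu (sub_pos.2 huv))
  exact lt_of_pow_lt_pow_left₀ 2 (norm_nonneg v) hsq

end AngleLePiDivThree

/-- Let `p, q, x ∈ ℝ²` satisfy `0 < ‖x − p‖ < ‖q − p‖`, and suppose the angle between the
vectors `x − p` and `q − p` is at most `π/3`. Then `‖x − q‖ < ‖q − p‖`; that is, `x` lies
in the open lune of `p` and `q`. -/
theorem mem_lune_of_angle_le (p q x : EuclideanSpace ℝ (Fin 2))
    (h0 : 0 < ‖x - p‖) (h1 : ‖x - p‖ < ‖q - p‖)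
    (hangle : InnerProductGeometry.angle (x - p) (q - p) ≤ Real.pi / 3) :
    ‖x - q‖ < ‖q - p‖ := by
  rw [← sub_sub_sub_cancel_right x q p]
  exact norm_sub_lt_of_angle_le_pi_div_three h0 h1 hangle
end

section
/- Let P ⊆ ℝ² be a finite set and let p, q ∈ P be distinct points such that the open lune of p and q contains no point of P. Then for every x ∈ P with x ≠ p such that the angle between the vectors x − p and q − p is at most π/3, one has ‖q − p‖ ≤ ‖x − p‖. (In words: if the lune of an edge pq is empty, then q is a nearest neighbor of p among the points of P lying in any cone of apex p and opening angle at most π/3 that contains q.) -/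
/-! If `x` were strictly closer to `p` than `q` is, the law of cosines with `cos ∠xpq ≥ 1/2`
would give `‖x - q‖² ≤ ‖x - p‖² + ‖q - p‖² - ‖x - p‖ ‖q - p‖ < ‖q - p‖²`, so `x` would lie in
the open lune of `p` and `q`. -/

namespace InnerProductGeometry

variable {V : Type*} [NormedAddCommGroup V] [InnerProductSpace ℝ V]

theorem half_le_cos_angle_of_angle_le_pi_div_three {u v : V} (h : angle u v ≤ Real.pi / 3) :
    1 / 2 ≤ Real.cos (angle u v) := by
  rw [← Real.cos_pi_div_three]
  exact Real.cos_le_cos_of_nonneg_of_le_pi (angle_nonneg u v) (by linarith [Real.pi_pos]) h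

theorem norm_sub_sq_le_of_angle_le_pi_div_three {u v : V} (h : angle u v ≤ Real.pi / 3) :
    ‖u - v‖ ^ 2 ≤ ‖u‖ ^ 2 + ‖v‖ ^ 2 - ‖u‖ * ‖v‖ := by
  have hcos := half_le_cos_angle_of_angle_le_pi_div_three h
  have hlaw := norm_sub_sq_eq_norm_sq_add_norm_sq_sub_two_mul_norm_mul_norm_mul_cos_angle u v
  have huv : 0 ≤ ‖u‖ * ‖v‖ := by positivity
  nlinarith

theorem norm_sub_lt_of_angle_le_pi_div_three {u v : V} (hu : u ≠ 0) (huv : ‖u‖ < ‖v‖)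
    (h : angle u v ≤ Real.pi / 3) : ‖u - v‖ < ‖v‖ := by
  have hu' : 0 < ‖u‖ := norm_pos_iff.2 hu
  have hsq : ‖u - v‖ ^ 2 < ‖v‖ ^ 2 := by
    nlinarith [norm_sub_sq_le_of_angle_le_pi_div_three h, mul_lt_mul_of_pos_left huv hu']
  exact lt_of_pow_lt_pow_left₀ 2 (norm_nonneg v) hsq

end InnerProductGeometry

theorem nearest_in_cone_of_empty_lune_general (P : Set (EuclideanSpace ℝ (Fin 2)))
    (p q : EuclideanSpace ℝ (Fin 2))
    (hlune : ∀ x ∈ P,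
      x ∉ Metric.ball p (dist p q) ∩ Metric.ball q (dist p q)) :
    ∀ x ∈ P, x ≠ p →
      InnerProductGeometry.angle (x - p) (q - p) ≤ Real.pi / 3 →
      ‖q - p‖ ≤ ‖x - p‖ := by
  intro x hx hxp hangle
  by_contra! hcloser
  have hfar : ‖(x - p) - (q - p)‖ < ‖q - p‖ :=
    InnerProductGeometry.norm_sub_lt_of_angle_le_pi_div_three (sub_ne_zero.2 hxp) hcloser hangle
  rw [sub_sub_sub_cancel_right] at hfar
  refine hlune x hx ⟨?_, ?_⟩ <;>
    simpa only [Metric.mem_ball, dist_eq_norm, norm_sub_rev p q]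

/-- Let `P ⊆ ℝ²` be a finite set and let `p, q ∈ P` be distinct points such that the open
lune of `p` and `q` (the intersection of the two open disks of radius `‖p − q‖` centered
at `p` and at `q`) contains no point of `P`. Then for every `x ∈ P` with `x ≠ p` such that
the angle between the vectors `x − p` and `q − p` is at most `π/3`, one has
`‖q − p‖ ≤ ‖x − p‖`. -/
theorem nearest_in_cone_of_empty_lune (P : Set (EuclideanSpace ℝ (Fin 2))) (hP : P.Finite)
    (p q : EuclideanSpace ℝ (Fin 2)) (hp : p ∈ P) (hq : q ∈ P) (hpq : p ≠ q)
    (hlune : ∀ x ∈ P,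
      x ∉ Metric.ball p (dist p q) ∩ Metric.ball q (dist p q)) :
    ∀ x ∈ P, x ≠ p →
      InnerProductGeometry.angle (x - p) (q - p) ≤ Real.pi / 3 →
      ‖q - p‖ ≤ ‖x - p‖ :=
  nearest_in_cone_of_empty_lune_general P p q hlune
end

section
/- Let ε ∈ (0,1) and let U, V ⊆ ℝ² be nonempty finite disjoint sets that are ε-well-separated, and assume all pairwise distances between distinct points of U ∪ V are distinct. Then every Euclidean minimum spanning tree of U ∪ V contains exactly one edge with one endpoint in U and one endpoint in V, and this edge joins the closest pair between U and V, i.e., the pair (p, q) ∈ U × V minimizing ‖p − q‖. -/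
/-- The distance between two sets of points: the infimum of pairwise distances. -/
noncomputable def setDist (U V : Set (EuclideanSpace ℝ (Fin 2))) : ℝ :=
  sInf (Set.image2 dist U V)

/-- The total edge length of a graph on a finite planar point set. -/
noncomputable def totalLength {P : Finset (EuclideanSpace ℝ (Fin 2))}
    (G : SimpleGraph ↥P) : ℝ :=
  ∑ᶠ e ∈ G.edgeSet,
    Sym2.lift ⟨fun (p q : ↥P) =>
      dist (p : EuclideanSpace ℝ (Fin 2)) (q : EuclideanSpace ℝ (Fin 2)),
      fun _ _ => dist_comm _ _⟩ e

/-- `T` is a Euclidean minimum spanning tree of `P`: a connected acyclic graph on vertex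
set `P` whose total edge length is minimal among all connected graphs on vertex set `P`. -/
def IsEMST (P : Finset (EuclideanSpace ℝ (Fin 2))) (T : SimpleGraph ↥P) : Prop :=
  T.Connected ∧ T.IsAcyclic ∧
    ∀ G : SimpleGraph ↥P, G.Connected → totalLength T ≤ totalLength G

attribute [local instance] Classical.decEq

/-!
Cut property of minimum spanning trees: deleting an edge `ab` of an MST splits it into the part
`A` containing `a` and the part `B` containing `b`, and no edge from `A` to `B` is shorter
than `ab`, since it could replace `ab`. Since the EMST is connected, it has a `U`-`V` edge `pq`.
Points of the same set are closer than `dist U V ≤ |pq|`, so a point of `V` cannot lie in `A`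
(it would be closer to `q` than `p` is) and a point of `U` cannot lie in `B`; hence `A = U` and
`B = V`. The cut property applied to the closest pair gives `|pq| = dist U V`, and any other
`U`-`V` edge would join `A` to `B` without going through `pq`.
-/

namespace SimpleGraph

variable {V : Type*} {G T : SimpleGraph V} {a b : V}

lemma Adj.deleteEdges_singleton {x y : V} (h : G.Adj x y) (hne : s(x, y) ≠ s(a, b)) :
    (G.deleteEdges {s(a, b)}).Adj x y :=
  (deleteEdges_adj ..).2 ⟨h, hne⟩

lemma Connected.reachable_deleteEdges_or (hG : G.Connected) (z : V) :
    (G.deleteEdges {s(a, b)}).Reachable a z ∨ (G.deleteEdges {s(a, b)}).Reachable b z := by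
  set G' := G.deleteEdges {s(a, b)}
  by_contra hz
  obtain ⟨d, -, hd, hd'⟩ := (hG.preconnected a z).some.exists_boundary_dart
    {z | G'.Reachable a z ∨ G'.Reachable b z} (Or.inl .rfl) hz
  by_cases he : s(d.fst, d.snd) = s(a, b)
  · obtain ⟨-, rfl⟩ | ⟨-, rfl⟩ := Sym2.eq_iff.1 he
    exacts [hd' (Or.inr .rfl), hd' (Or.inl .rfl)]
  · have := (d.adj.deleteEdges_singleton he).reachable
    exact hd' (hd.imp (·.trans this) (·.trans this))

lemma Connected.exists_adj_mem_notMem (hG : G.Connected) {S : Set V} {u v : V} (hu : u ∈ S)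
    (hv : v ∉ S) : ∃ x y, G.Adj x y ∧ x ∈ S ∧ y ∉ S := by
  obtain ⟨d, -, hd⟩ := (hG.preconnected u v).some.exists_boundary_dart S hu hv
  exact ⟨d.fst, d.snd, d.adj, hd⟩

def IsMinSpanningTree (w : Sym2 V → ℝ) (T : SimpleGraph V) : Prop :=
  T.Connected ∧ T.IsAcyclic ∧
    ∀ G : SimpleGraph V, G.Connected → ∑ᶠ e ∈ T.edgeSet, w e ≤ ∑ᶠ e ∈ G.edgeSet, w e

namespace IsMinSpanningTree

variable [Finite V] {w : Sym2 V → ℝ}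

/-- Cut property: otherwise exchanging `s(a, b)` for `s(x, y)` would give a lighter spanning
tree. -/
theorem le_of_reachable_deleteEdges (hT : T.IsMinSpanningTree w) (hab : T.Adj a b) {x y : V}
    (hx : (T.deleteEdges {s(a, b)}).Reachable a x)
    (hy : (T.deleteEdges {s(a, b)}).Reachable b y) : w s(a, b) ≤ w s(x, y) := by
  obtain ⟨hconn, hacyc, hmin⟩ := hT
  set T' := T.deleteEdges {s(a, b)}
  have hxy : ¬ T'.Reachable x y := fun h ↦
    isAcyclic_iff_forall_adj_isBridge.1 hacyc hab (hx.trans (h.trans hy.symm))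
  have hne : x ≠ y := fun h ↦ hxy (h ▸ .rfl)
  have hxy_adj : (T' ⊔ edge x y).Adj x y := Or.inr ((edge_adj ..).2 ⟨Or.inl ⟨rfl, rfl⟩, hne⟩)
  have hconn' : (T' ⊔ edge x y).Connected := by
    refine (connected_iff_exists_forall_reachable _).2 ⟨a, fun z ↦ ?_⟩
    have hle : T' ≤ T' ⊔ edge x y := le_sup_left
    rcases hconn.reachable_deleteEdges_or (a := a) (b := b) z with hz | hz
    · exact hz.mono hle
    · exact (hx.mono hle).trans (hxy_adj.reachable.trans ((hy.mono hle).symm.trans (hz.mono hle)))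
  have hsumT : ∑ᶠ e ∈ T.edgeSet, w e = w s(a, b) + ∑ᶠ e ∈ T'.edgeSet, w e := by
    rw [edgeSet_deleteEdges, ← finsum_mem_insert w (by simp) (Set.toFinite _),
      Set.insert_sdiff_singleton, Set.insert_eq_of_mem (T.mem_edgeSet.2 hab)]
  have hsumT' : ∑ᶠ e ∈ (T' ⊔ edge x y).edgeSet, w e = w s(x, y) + ∑ᶠ e ∈ T'.edgeSet, w e := by
    rw [edgeSet_sup, edgeSet_edge_of_ne hne, Set.union_singleton,
      finsum_mem_insert w (fun h ↦ hxy (Adj.reachable h)) (Set.toFinite _)]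
  linarith [hmin _ hconn']

theorem reachable_deleteEdges_iff (hT : T.IsMinSpanningTree w) (hab : T.Adj a b) {S : Set V}
    (hSc : ∀ x ∉ S, w s(x, b) < w s(a, b)) (hS : ∀ y ∈ S, w s(a, y) < w s(a, b)) (z : V) :
    (T.deleteEdges {s(a, b)}).Reachable a z ↔ z ∈ S := by
  refine ⟨fun hz ↦ ?_, fun hz ↦ (hT.1.reachable_deleteEdges_or z).resolve_right fun hz' ↦ ?_⟩
  · by_contra hzS
    exact (hSc z hzS).not_ge (hT.le_of_reachable_deleteEdges hab hz .rfl)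
  · exact (hS z hz).not_ge (hT.le_of_reachable_deleteEdges hab .rfl hz')

end IsMinSpanningTree

lemma eq_of_adj_of_reachable_deleteEdges_iff {S : Set V}
    (hS : ∀ z, (T.deleteEdges {s(a, b)}).Reachable a z ↔ z ∈ S) {x y : V} (hxy : T.Adj x y)
    (hx : x ∈ S) (hy : y ∉ S) : s(x, y) = s(a, b) := by
  by_contra hne
  exact hy ((hS y).1 (((hS x).2 hx).trans (hxy.deleteEdges_singleton hne).reachable))

end SimpleGraph

local notation "ℝ²" => EuclideanSpace ℝ (Fin 2)

lemma setDist_le_dist {U V : Set ℝ²} {p q : ℝ²} (hp : p ∈ U) (hq : q ∈ V) :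
    setDist U V ≤ dist p q :=
  csInf_le ⟨0, Set.forall_mem_image2.2 fun _ _ _ _ ↦ dist_nonneg⟩ (Set.mem_image2_of_mem hp hq)

lemma exists_dist_eq_setDist {U V : Set ℝ²} (hU : U.Finite) (hV : V.Finite) (hU' : U.Nonempty)
    (hV' : V.Nonempty) : ∃ p ∈ U, ∃ q ∈ V, dist p q = setDist U V :=
  (hU'.image2 hV').csInf_mem (hU.image2 _ hV)

lemma setDist_pos {U V : Set ℝ²} (hU : U.Finite) (hV : V.Finite) (hU' : U.Nonempty)
    (hV' : V.Nonempty) (hUV : Disjoint U V) : 0 < setDist U V := by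
  obtain ⟨p, hp, q, hq, h⟩ := exists_dist_eq_setDist hU hV hU' hV'
  exact h ▸ dist_pos.2 (hUV.ne_of_mem hp hq)

lemma dist_lt_of_diam_le_mul {α : Type*} [PseudoMetricSpace α] {s : Set α}
    (hs : Bornology.IsBounded s) {ε d : ℝ} (hε : ε < 1) (hd : 0 < d) (h : Metric.diam s ≤ ε * d)
    {x y : α} (hx : x ∈ s) (hy : y ∈ s) : dist x y < d :=
  calc dist x y ≤ Metric.diam s := Metric.dist_le_diam_of_mem hs hx hy
    _ ≤ ε * d := h
    _ < d := mul_lt_of_lt_one_left hd hε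

noncomputable def edgeLength {P : Finset ℝ²} : Sym2 ↥P → ℝ :=
  Sym2.lift ⟨fun p q ↦ dist (p : ℝ²) (q : ℝ²), fun _ _ ↦ dist_comm _ _⟩

lemma isEMST_iff_isMinSpanningTree {P : Finset ℝ²} {T : SimpleGraph ↥P} :
    IsEMST P T ↔ T.IsMinSpanningTree edgeLength :=
  Iff.rfl

theorem IsEMST.reachable_deleteEdges_iff_mem {U V : Finset ℝ²} {T : SimpleGraph ↥(U ∪ V)}
    (hT : IsEMST (U ∪ V) T) (hU : ∀ x ∈ U, ∀ y ∈ U, dist x y < setDist U V)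
    (hV : ∀ x ∈ V, ∀ y ∈ V, dist x y < setDist U V) {p q : ↥(U ∪ V)} (hp : (p : ℝ²) ∈ U)
    (hq : (q : ℝ²) ∈ V) (hpq : T.Adj p q) (z : ↥(U ∪ V)) :
    (T.deleteEdges {s(p, q)}).Reachable p z ↔ (z : ℝ²) ∈ U := by
  have hd : setDist U V ≤ dist (p : ℝ²) q := setDist_le_dist hp hq
  refine (isEMST_iff_isMinSpanningTree.1 hT).reachable_deleteEdges_iff hpq
    (S := {z | (z : ℝ²) ∈ U}) (fun x hx ↦ ?_) (fun y hy ↦ (hU _ hp _ hy).trans_le hd) z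
  exact (hV _ ((Finset.mem_union.1 x.2).resolve_left hx) _ hq).trans_le hd

theorem emst_unique_cross_edge_of_wellSeparated_general (ε : ℝ) (hε1 : ε < 1)
    (U V : Finset (EuclideanSpace ℝ (Fin 2)))
    (hU : U.Nonempty) (hV : V.Nonempty) (hdisj : Disjoint U V)
    (hws : max (Metric.diam (U : Set (EuclideanSpace ℝ (Fin 2))))
        (Metric.diam (V : Set (EuclideanSpace ℝ (Fin 2))))
      ≤ ε * setDist ↑U ↑V)
    (T : SimpleGraph ↥(U ∪ V)) (hT : IsEMST (U ∪ V) T) :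
    ∃ p q : ↥(U ∪ V),
      (p : EuclideanSpace ℝ (Fin 2)) ∈ U ∧ (q : EuclideanSpace ℝ (Fin 2)) ∈ V ∧
      T.Adj p q ∧
      dist (p : EuclideanSpace ℝ (Fin 2)) (q : EuclideanSpace ℝ (Fin 2)) = setDist ↑U ↑V ∧
      (∀ p' q' : ↥(U ∪ V),
        (p' : EuclideanSpace ℝ (Fin 2)) ∈ U → (q' : EuclideanSpace ℝ (Fin 2)) ∈ V →
        T.Adj p' q' → p' = p ∧ q' = q) := by
  have hd : 0 < setDist U V :=
    setDist_pos U.finite_toSet V.finite_toSet hU hV (Finset.disjoint_coe.2 hdisj)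
  obtain ⟨p₀, hp₀, q₀, hq₀, hd₀⟩ := exists_dist_eq_setDist U.finite_toSet V.finite_toSet hU hV
  obtain ⟨u, hu⟩ := hU
  obtain ⟨v, hv⟩ := hV
  obtain ⟨p, q, hpq, hp, hqU⟩ := hT.1.exists_adj_mem_notMem (S := {z | (z : ℝ²) ∈ U})
    (u := ⟨u, Finset.mem_union_left _ hu⟩) (v := ⟨v, Finset.mem_union_right _ hv⟩) hu
    (Finset.disjoint_right.1 hdisj hv)
  have hq : (q : ℝ²) ∈ V := (Finset.mem_union.1 q.2).resolve_left hqU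
  have hside := hT.reachable_deleteEdges_iff_mem
    (fun x hx y hy ↦ dist_lt_of_diam_le_mul U.finite_toSet.isBounded hε1 hd
      ((le_max_left ..).trans hws) hx hy)
    (fun x hx y hy ↦ dist_lt_of_diam_le_mul V.finite_toSet.isBounded hε1 hd
      ((le_max_right ..).trans hws) hx hy) hp hq hpq
  refine ⟨p, q, hp, hq, hpq, le_antisymm ?_ (setDist_le_dist hp hq), fun p' q' hp' hq' hpq' ↦ ?_⟩
  · rw [← hd₀]
    refine (isEMST_iff_isMinSpanningTree.1 hT).le_of_reachable_deleteEdges hpq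
      (x := ⟨p₀, Finset.mem_union_left _ hp₀⟩) (y := ⟨q₀, Finset.mem_union_right _ hq₀⟩)
      ((hside _).2 hp₀) ((hT.1.reachable_deleteEdges_or _).resolve_left fun h ↦ ?_)
    exact Finset.disjoint_right.1 hdisj hq₀ ((hside _).1 h)
  · obtain h | ⟨rfl, -⟩ := Sym2.eq_iff.1 (SimpleGraph.eq_of_adj_of_reachable_deleteEdges_iff
      hside hpq' hp' (Finset.disjoint_right.1 hdisj hq'))
    exacts [h, (Finset.disjoint_left.1 hdisj hp' hq).elim]

/-- Let `ε ∈ (0,1)` and let `U, V ⊆ ℝ²` be nonempty finite disjoint sets that are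
`ε`-well-separated, with all pairwise distances between distinct points of `U ∪ V`
distinct. Then every Euclidean minimum spanning tree of `U ∪ V` contains exactly one edge
with one endpoint in `U` and one endpoint in `V`, and this edge joins the closest pair
between `U` and `V`. -/
theorem emst_unique_cross_edge_of_wellSeparated (ε : ℝ) (hε0 : 0 < ε) (hε1 : ε < 1)
    (U V : Finset (EuclideanSpace ℝ (Fin 2)))
    (hU : U.Nonempty) (hV : V.Nonempty) (hdisj : Disjoint U V)
    (hws : max (Metric.diam (U : Set (EuclideanSpace ℝ (Fin 2))))
        (Metric.diam (V : Set (EuclideanSpace ℝ (Fin 2))))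
      ≤ ε * setDist ↑U ↑V)
    (hdist : ∀ p ∈ U ∪ V, ∀ q ∈ U ∪ V, ∀ r ∈ U ∪ V, ∀ s ∈ U ∪ V,
      p ≠ q → r ≠ s → dist p q = dist r s →
        ({p, q} : Set (EuclideanSpace ℝ (Fin 2))) = {r, s})
    (T : SimpleGraph ↥(U ∪ V)) (hT : IsEMST (U ∪ V) T) :
    ∃ p q : ↥(U ∪ V),
      (p : EuclideanSpace ℝ (Fin 2)) ∈ U ∧ (q : EuclideanSpace ℝ (Fin 2)) ∈ V ∧
      T.Adj p q ∧
      dist (p : EuclideanSpace ℝ (Fin 2)) (q : EuclideanSpace ℝ (Fin 2)) = setDist ↑U ↑V ∧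
      (∀ p' q' : ↥(U ∪ V),
        (p' : EuclideanSpace ℝ (Fin 2)) ∈ U → (q' : EuclideanSpace ℝ (Fin 2)) ∈ V →
        T.Adj p' q' → p' = p ∧ q' = q) :=
  emst_unique_cross_edge_of_wellSeparated_general ε hε1 U V hU hV hdisj hws T hT
end

section
/- Let c > 1 and let P ⊆ ℝ² be a finite set. Call a nonempty subset U ⊆ P a c-cluster if U = P or dist(U, P \ U) ≥ c · diam(U). Then any two c-clusters A and B satisfy A ∩ B = ∅, or A ⊆ B, or B ⊆ A; that is, the c-clusters of P form a laminar family. -/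
open Metric

lemma setDist_le_dist_s8 {U V : Set (EuclideanSpace ℝ (Fin 2))} {x y : EuclideanSpace ℝ (Fin 2)}
    (hx : x ∈ U) (hy : y ∈ V) : setDist U V ≤ dist x y := by
  refine csInf_le ⟨0, ?_⟩ ⟨x, hx, y, hy, rfl⟩
  rintro _ ⟨a, -, b, -, rfl⟩
  exact dist_nonneg

section Separated

variable {X : Type*} [MetricSpace X] {c : ℝ} {P A B : Set X}

lemma mul_diam_le_diam_of_crossing
    (hA : ∀ x ∈ A, ∀ y ∈ P \ A, c * diam A ≤ dist x y)
    (hB : Bornology.IsBounded B) (hBP : B ⊆ P) {x b : X}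
    (hx : x ∈ A ∩ B) (hb : b ∈ B \ A) : c * diam A ≤ diam B :=
  (hA x hx.1 b ⟨hBP hb.1, hb.2⟩).trans (dist_le_diam_of_mem hB hx.2 hb.1)

lemma laminar_of_separated (hc : 1 < c)
    (hAb : Bornology.IsBounded A) (hBb : Bornology.IsBounded B) (hAP : A ⊆ P) (hBP : B ⊆ P)
    (hA : ∀ x ∈ A, ∀ y ∈ P \ A, c * diam A ≤ dist x y)
    (hB : ∀ x ∈ B, ∀ y ∈ P \ B, c * diam B ≤ dist x y) :
    A ∩ B = ∅ ∨ A ⊆ B ∨ B ⊆ A := by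
  by_contra! ⟨⟨x, hx⟩, hnAB, hnBA⟩
  obtain ⟨a, haA, haB⟩ := Set.not_subset.1 hnAB
  obtain ⟨b, hbB, hbA⟩ := Set.not_subset.1 hnBA
  have hAleB := mul_diam_le_diam_of_crossing hA hBb hBP hx ⟨hbB, hbA⟩
  have hBleA := mul_diam_le_diam_of_crossing hB hAb hAP ⟨hx.2, hx.1⟩ ⟨haA, haB⟩
  have hdiamB : diam B = 0 := by
    nlinarith [diam_nonneg (s := A), diam_nonneg (s := B)]
  have hxb : x = b := dist_le_zero.1 (hdiamB ▸ dist_le_diam_of_mem hBb hx.2 hbB)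
  exact hbA (hxb ▸ hx.1)

end Separated

theorem cClusters_laminar_general (c : ℝ) (hc : 1 < c)
    (P : Set (EuclideanSpace ℝ (Fin 2))) (hP : P.Finite)
    (A B : Set (EuclideanSpace ℝ (Fin 2)))
    (hAP : A ⊆ P)
    (hA : A = P ∨ c * Metric.diam A ≤ setDist A (P \ A))
    (hBP : B ⊆ P)
    (hB : B = P ∨ c * Metric.diam B ≤ setDist B (P \ B)) :
    A ∩ B = ∅ ∨ A ⊆ B ∨ B ⊆ A := by
  rcases hA with rfl | hA
  · exact Or.inr (Or.inr hBP)
  rcases hB with rfl | hB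
  · exact Or.inr (Or.inl hAP)
  exact laminar_of_separated hc (hP.subset hAP).isBounded (hP.subset hBP).isBounded hAP hBP
    (fun x hx y hy => hA.trans (setDist_le_dist_s8 hx hy))
    (fun x hx y hy => hB.trans (setDist_le_dist_s8 hx hy))

/-- Let `c > 1` and let `P ⊆ ℝ²` be a finite set. Call a nonempty subset `U ⊆ P` a
`c`-cluster if `U = P` or `dist(U, P \ U) ≥ c · diam(U)`. Then any two `c`-clusters `A`
and `B` satisfy `A ∩ B = ∅`, or `A ⊆ B`, or `B ⊆ A`: the `c`-clusters form a laminar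
family. -/
theorem cClusters_laminar (c : ℝ) (hc : 1 < c)
    (P : Set (EuclideanSpace ℝ (Fin 2))) (hP : P.Finite)
    (A B : Set (EuclideanSpace ℝ (Fin 2)))
    (hAne : A.Nonempty) (hAP : A ⊆ P)
    (hA : A = P ∨ c * Metric.diam A ≤ setDist A (P \ A))
    (hBne : B.Nonempty) (hBP : B ⊆ P)
    (hB : B = P ∨ c * Metric.diam B ≤ setDist B (P \ B)) :
    A ∩ B = ∅ ∨ A ⊆ B ∨ B ⊆ A :=
  cClusters_laminar_general c hc P hP A B hAP hA hBP hB
end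

section
/- Let ε ∈ (0, π/400], and let p, q ∈ ℝ² satisfy ‖q − p‖ = 1 and suppose the angle between the vector q − p and the upward direction (0, 1) is at most 17ε. Then every point x ∈ ℝ² with ‖x − q‖ ≤ ε such that the angle between x − q and the downward direction (0, −1) is at most π/4 satisfies ‖x − p‖ ≤ 1. (In words: the part of the closed downward cone of opening angle π/2 with apex q that lies within distance ε of q is contained in the closed unit disk around p.) -/
/-- The upward unit vector `(0, 1)` in the plane. -/
noncomputable def upDir : EuclideanSpace ℝ (Fin 2) :=
  (WithLp.equiv 2 (Fin 2 → ℝ)).symm ![0, 1]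

/-- The downward unit vector `(0, −1)` in the plane. -/
noncomputable def downDir : EuclideanSpace ℝ (Fin 2) :=
  (WithLp.equiv 2 (Fin 2 → ℝ)).symm ![0, -1]

/-!
Write `u = q - p` and `v = x - q`, so that `x - p = u + v`. Since `downDir = -upDir`, the
triangle inequality for angles gives `π ≤ ∠(up, u) + ∠(u, v) + ∠(v, down)`, hence
`∠(u, v) ≥ 3π/4 - 17ε ≥ 2π/3`. Then `cos ∠(u, v) ≤ -1/2`, and
`‖u + v‖² ≤ ‖u‖² - ‖u‖‖v‖ + ‖v‖² ≤ ‖u‖²` because `‖v‖ ≤ ε < 1 = ‖u‖`.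
-/

open InnerProductGeometry Real

theorem norm_add_le_of_two_pi_div_three_le_angle {V : Type*} [NormedAddCommGroup V]
    [InnerProductSpace ℝ V] {u v : V} (hvu : ‖v‖ ≤ ‖u‖) (hangle : 2 * π / 3 ≤ angle u v) :
    ‖u + v‖ ≤ ‖u‖ := by
  have hcos : cos (angle u v) ≤ -1 / 2 := by
    calc cos (angle u v) ≤ cos (2 * π / 3) :=
          cos_le_cos_of_nonneg_of_le_pi (by positivity) (angle_le_pi u v) hangle
      _ = -1 / 2 := by
        rw [show 2 * π / 3 = π - π / 3 by ring, cos_pi_sub, cos_pi_div_three]; ring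
  have hinner : 2 * inner ℝ u v ≤ -(‖u‖ * ‖v‖) := by
    rw [← cos_angle_mul_norm_mul_norm]
    nlinarith [mul_nonneg (norm_nonneg u) (norm_nonneg v)]
  have hsq : ‖u + v‖ ^ 2 ≤ ‖u‖ ^ 2 := by
    rw [norm_add_sq_real]
    nlinarith [mul_le_mul_of_nonneg_right hvu (norm_nonneg v)]
  exact (pow_le_pow_iff_left₀ (norm_nonneg _) (norm_nonneg _) two_ne_zero).mp hsq

theorem downDir_eq_neg_upDir : downDir = -upDir := by
  ext i; fin_cases i <;> simp [upDir, downDir]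

theorem downward_cone_near_q_in_unit_disk_general (ε : ℝ) (hε1 : ε ≤ Real.pi / 400)
    (p q : EuclideanSpace ℝ (Fin 2)) (hpq : ‖q - p‖ = 1)
    (hdir : InnerProductGeometry.angle (q - p) upDir ≤ 17 * ε) :
    ∀ x : EuclideanSpace ℝ (Fin 2), ‖x - q‖ ≤ ε →
      InnerProductGeometry.angle (x - q) downDir ≤ Real.pi / 4 →
      ‖x - p‖ ≤ 1 := by
  intro x hx hang
  have hdown : angle (q - p) downDir = π - angle (q - p) upDir := by
    rw [downDir_eq_neg_upDir, angle_neg_right]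
  have htri := angle_le_angle_add_angle (q - p) (x - q) downDir
  have hangle : 2 * π / 3 ≤ angle (q - p) (x - q) := by linarith [pi_pos]
  have hsmall : ‖x - q‖ ≤ ‖q - p‖ := by linarith [pi_lt_four]
  rw [← hpq, show x - p = (q - p) + (x - q) by abel]
  exact norm_add_le_of_two_pi_div_three_le_angle hsmall hangle

/-- Let `ε ∈ (0, π/400]`, and let `p, q ∈ ℝ²` satisfy `‖q − p‖ = 1`, where the angle
between `q − p` and the upward direction `(0, 1)` is at most `17ε`. Then every point `x`
with `‖x − q‖ ≤ ε` such that the angle between `x − q` and the downward direction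
`(0, −1)` is at most `π/4` satisfies `‖x − p‖ ≤ 1`. -/
theorem downward_cone_near_q_in_unit_disk (ε : ℝ) (hε0 : 0 < ε) (hε1 : ε ≤ Real.pi / 400)
    (p q : EuclideanSpace ℝ (Fin 2)) (hpq : ‖q - p‖ = 1)
    (hdir : InnerProductGeometry.angle (q - p) upDir ≤ 17 * ε) :
    ∀ x : EuclideanSpace ℝ (Fin 2), ‖x - q‖ ≤ ε →
      InnerProductGeometry.angle (x - q) downDir ≤ Real.pi / 4 →
      ‖x - p‖ ≤ 1 :=
  downward_cone_near_q_in_unit_disk_general ε hε1 p q hpq hdir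
end
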